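/- arXiv:1110.2808 — 5 statements merged into one kernel-verified Lean document; each statement's English description precedes it below -/
import Mathlib

section
/- Let g : ℂ → ℂ be continuously differentiable (over ℝ) and let w ∈ ℂ. Define S(z) = exp(g(w) − g(z)) / (π (z − w)) for z ≠ w. Then for every continuously differentiable, compactly supported φ : ℂ → ℂ, the function z ↦ S(z)·(−∂̄φ(z) + ∂̄g(z)·φ(z)) is integrable on ℂ and ∫_ℂ S(z)·(−∂̄φ(z) + ∂̄g(z)·φ(z)) dA(z) = φ(w). (In other words, S is an inverting kernel for the perturbed Cauchy–Riemann operator ∂̄ + α with α = (∂̄g) d z̄: one has (∂̄ + ∂̄g) S = δ_w in the sense of distributions.) -/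
/-!
Conjugating by `e^g` removes the zeroth-order term: for `ψ = e^{g(w) - g} φ` one has
`∂̄ψ = e^{g(w) - g} (∂̄φ - ∂̄g φ)`, so the integrand is `-∂̄ψ(z) / (π (z - w))` and `ψ(w) = φ(w)`.
It remains to prove the Cauchy–Pompeiu formula `∫ ∂̄ψ(z) / (π (z - w)) dA = -ψ(w)` for the
compactly supported `C¹` function `ψ`. In polar coordinates `z = w + r e^{iθ}` the Jacobian `r`
absorbs the singularity: `r ∂̄ψ / (π (z - w)) = (∂_r ψ + (i/r) ∂_θ ψ) / (2π)`. The radial integral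
of `∂_r ψ` is `-ψ(w)` for every `θ`, and the angular integral of `∂_θ ψ` vanishes by periodicity.
-/

open Filter Topology MeasureTheory

/-- Wirtinger derivative `∂̄f(z) = ½(∂ₓf(z) + i ∂ᵧf(z))`, where `∂ₓf(z)` and `∂ᵧf(z)`
are the real-Fréchet derivatives of `f` at `z` in the directions `1` and `i`. -/
noncomputable def dbar (f : ℂ → ℂ) (z : ℂ) : ℂ :=
  (1 / 2) * (fderiv ℝ f z 1 + Complex.I * fderiv ℝ f z Complex.I)

open Complex Set
open scoped ComplexConjugate Real

theorem HasFDerivAt.dbar_eq {f : ℂ → ℂ} {f' : ℂ →L[ℝ] ℂ} {z : ℂ} (h : HasFDerivAt f f' z) :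
    dbar f z = (1 / 2) * (f' 1 + I * f' I) := by
  rw [dbar, h.fderiv]

theorem dbar_mul {f h : ℂ → ℂ} {z : ℂ} (hf : DifferentiableAt ℝ f z)
    (hh : DifferentiableAt ℝ h z) :
    dbar (fun z => f z * h z) z = f z * dbar h z + h z * dbar f z := by
  rw [HasFDerivAt.dbar_eq (f := fun z => f z * h z) (hf.hasFDerivAt.mul hh.hasFDerivAt), dbar,
    dbar]
  simp only [add_apply, smul_apply, smul_eq_mul]
  ring

theorem dbar_cexp {f : ℂ → ℂ} {z : ℂ} (hf : DifferentiableAt ℝ f z) :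
    dbar (fun z => exp (f z)) z = exp (f z) * dbar f z := by
  rw [hf.hasFDerivAt.cexp.dbar_eq, dbar]
  simp only [smul_apply, smul_eq_mul]
  ring

theorem dbar_const_sub (a : ℂ) {f : ℂ → ℂ} {z : ℂ} (hf : DifferentiableAt ℝ f z) :
    dbar (fun z => a - f z) z = -dbar f z := by
  rw [(hf.hasFDerivAt.const_sub a).dbar_eq, dbar]
  simp only [neg_apply]
  ring

/-- For `e = e^{iθ}` this is the polar form `∂̄ = (e^{iθ}/2)(∂_r + (i/r) ∂_θ)`. -/
theorem two_mul_conj_mul_dbar (f : ℂ → ℂ) (z e : ℂ) :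
    2 * conj e * dbar f z = fderiv ℝ f z e + I * fderiv ℝ f z (I * e) := by
  obtain ⟨a, b, rfl⟩ : ∃ a b : ℝ, e = a • (1 : ℂ) + b • I :=
    ⟨e.re, e.im, by simp⟩
  have hIe : I * (a • (1 : ℂ) + b • I) = (-b) • (1 : ℂ) + a • I := by
    simp [Complex.ext_iff]
  rw [hIe, dbar]
  simp only [map_add, map_smul]
  simp only [Complex.real_smul, map_mul, conj_ofReal, conj_I, map_one]
  push_cast
  ring_nf
  rw [I_sq]
  ring

section PolarCoord

variable {E : Type*} [NormedAddCommGroup E] [NormedSpace ℝ E]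

theorem Complex.integrable_of_integrableOn_polarCoord_symm {f : ℂ → E}
    (h : IntegrableOn (fun p => p.1 • f (Complex.polarCoord.symm p)) polarCoord.target) :
    Integrable f := by
  set G : ℝ × ℝ → E := f ∘ measurableEquivRealProd.symm
  have hG : IntegrableOn (fun p => |(fderivPolarCoordSymm p).det| • G (polarCoord.symm p))
      polarCoord.target := by
    refine h.congr_fun (fun p hp => ?_) polarCoord.open_target.measurableSet
    rw [det_fderivPolarCoordSymm, abs_of_pos hp.1]
    rfl
  have hG' := (integrableOn_image_iff_integrableOn_abs_det_fderiv_smul volume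
    polarCoord.open_target.measurableSet
    (fun p _ => (hasFDerivAt_polarCoord_symm p).hasFDerivWithinAt) polarCoord.symm.injOn G).2 hG
  rw [polarCoord.symm_image_target_eq_source, IntegrableOn,
    Measure.restrict_congr_set polarCoord_source_ae_eq_univ, Measure.restrict_univ] at hG'
  simpa [G, Function.comp_def] using (volume_preserving_equiv_real_prod.integrable_comp_emb
    measurableEquivRealProd.measurableEmbedding).2 hG'

theorem add_polarCoord_symm_eq_circleMap (w : ℂ) (p : ℝ × ℝ) :
    w + Complex.polarCoord.symm p = circleMap w p.1 p.2 := by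
  rw [Complex.polarCoord_symm_apply, circleMap, exp_mul_I, ← ofReal_cos, ← ofReal_sin]

theorem integral_comp_circleMap (f : ℂ → E) (w : ℂ) :
    ∫ p in polarCoord.target, p.1 • f (circleMap w p.1 p.2) = ∫ z, f z := by
  simp_rw [← add_polarCoord_symm_eq_circleMap]
  rw [Complex.integral_comp_polarCoord_symm (fun z => f (w + z)), integral_add_left_eq_self]

theorem integrable_of_integrableOn_circleMap {f : ℂ → E} (w : ℂ)
    (h : IntegrableOn (fun p => p.1 • f (circleMap w p.1 p.2)) polarCoord.target) :
    Integrable f := by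
  simp_rw [← add_polarCoord_symm_eq_circleMap] at h
  simpa using (Complex.integrable_of_integrableOn_polarCoord_symm
    (f := fun z => f (w + z)) h).comp_sub_right w

end PolarCoord

theorem HasCompactSupport.integral_Ioi_fderiv_apply_eq {E F : Type*} [NormedAddCommGroup E]
    [NormedSpace ℝ E] [NormedAddCommGroup F] [NormedSpace ℝ F] [CompleteSpace F] {ψ : E → F}
    (hψ : ContDiff ℝ 1 ψ) (hcs : HasCompactSupport ψ) (w : E) {v : E} (hv : v ≠ 0) :
    ∫ r in Ioi (0 : ℝ), fderiv ℝ ψ (w + r • v) v = -ψ w := by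
  have hline : Topology.IsClosedEmbedding fun r : ℝ => w + r • v :=
    (Homeomorph.addLeft w).isClosedEmbedding.comp (isClosedEmbedding_smul_left hv)
  have hderiv (r : ℝ) : HasDerivAt (fun r : ℝ => ψ (w + r • v)) (fderiv ℝ ψ (w + r • v) v) r :=
    ((hψ.differentiable one_ne_zero _).hasFDerivAt.comp_hasDerivAt r
      (((hasDerivAt_id r).smul_const v).const_add w)).congr_deriv (by simp)
  have h := HasCompactSupport.integral_Ioi_deriv_eq (f := fun r : ℝ => ψ (w + r • v))
    (hψ.comp (contDiff_const.add (contDiff_id.smul contDiff_const)))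
    (hcs.comp_isClosedEmbedding hline) 0
  simpa only [(hderiv _).deriv, zero_smul, add_zero] using h

section Circle

variable {F : Type*} [NormedAddCommGroup F] [NormedSpace ℝ F] {ψ : ℂ → F}

theorem integral_fderiv_circleMap_I_mul_exp [CompleteSpace F] (hψ : ContDiff ℝ 1 ψ) (w : ℂ)
    {r : ℝ} (hr : r ≠ 0) :
    ∫ θ in (-π)..π, fderiv ℝ ψ (circleMap w r θ) (I * exp (θ * I)) = 0 := by
  have hderiv (θ : ℝ) : HasDerivAt (fun θ => ψ (circleMap w r θ))
      (r • fderiv ℝ ψ (circleMap w r θ) (I * exp (θ * I))) θ := by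
    refine ((hψ.differentiable one_ne_zero _).hasFDerivAt.comp_hasDerivAt θ
      (hasDerivAt_circleMap w r θ)).congr_deriv ?_
    rw [← map_smul, circleMap_zero, real_smul]
    ring_nf
  have hcont : Continuous fun θ : ℝ => r • fderiv ℝ ψ (circleMap w r θ) (I * exp (θ * I)) := by
    have := hψ.continuous_fderiv one_ne_zero
    fun_prop
  have hperiod : circleMap w r π = circleMap w r (-π) := by
    rw [← periodic_circleMap w r (-π)]
    ring_nf
  have h := intervalIntegral.integral_eq_sub_of_hasDerivAt (fun θ _ => hderiv θ)
    (hcont.intervalIntegrable (-π) π)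
  rw [hperiod, sub_self, intervalIntegral.integral_smul] at h
  exact (smul_eq_zero.1 h).resolve_left hr

theorem integrableOn_polarCoord_target_fderiv_circleMap (hψ : ContDiff ℝ 1 ψ)
    (hcs : HasCompactSupport ψ) (w : ℂ) {v : ℝ → ℂ} (hv : Continuous v) :
    IntegrableOn (fun p : ℝ × ℝ => fderiv ℝ ψ (circleMap w p.1 p.2) (v p.2))
      polarCoord.target := by
  obtain ⟨R, hR⟩ := (hcs.fderiv (𝕜 := ℝ)).isCompact.isBounded.subset_closedBall w
  have hcont : Continuous fun p : ℝ × ℝ => fderiv ℝ ψ (circleMap w p.1 p.2) (v p.2) := by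
    have := hψ.continuous_fderiv one_ne_zero
    unfold circleMap
    fun_prop
  refine (hcont.continuousOn.integrableOn_compact (isCompact_Icc.prod isCompact_Icc)
    : IntegrableOn _ (Icc 0 R ×ˢ Icc (-π) π)).of_forall_sdiff_eq_zero
    polarCoord.open_target.measurableSet ?_
  rintro ⟨r, θ⟩ ⟨⟨hr, hθ⟩, hnot⟩
  have hRr : R < r := by
    by_contra! h
    exact hnot ⟨⟨le_of_lt hr, h⟩, Ioo_subset_Icc_self hθ⟩
  have hout : circleMap w r θ ∉ tsupport (fderiv ℝ ψ) := fun hmem => by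
    have := hR hmem
    rw [Metric.mem_closedBall, dist_eq_norm, circleMap_sub_center, norm_circleMap_zero,
      abs_of_pos hr] at this
    linarith
  simp [image_eq_zero_of_notMem_tsupport hout]

theorem integral_polarCoord_target_fderiv_circleMap_exp [CompleteSpace F] (hψ : ContDiff ℝ 1 ψ)
    (hcs : HasCompactSupport ψ) (w : ℂ) :
    ∫ p in polarCoord.target, fderiv ℝ ψ (circleMap w p.1 p.2) (exp (p.2 * I)) =
      (2 * π) • -ψ w := by
  have hint := integrableOn_polarCoord_target_fderiv_circleMap hψ hcs w
    (v := fun θ => exp (θ * I)) (by fun_prop)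
  rw [IntegrableOn, polarCoord_target, Measure.volume_eq_prod, ← Measure.prod_restrict] at hint
  have hradial (θ : ℝ) :
      ∫ r in Ioi (0 : ℝ), fderiv ℝ ψ (circleMap w r θ) (exp (θ * I)) = -ψ w := by
    simpa only [circleMap, real_smul] using
      hcs.integral_Ioi_fderiv_apply_eq hψ w (exp_ne_zero (θ * I))
  rw [polarCoord_target, Measure.volume_eq_prod, ← Measure.prod_restrict,
    integral_prod_symm _ hint]
  simp_rw [hradial]
  rw [setIntegral_const, Real.volume_real_Ioo_of_le (by linarith [Real.pi_pos])]
  ring_nf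

theorem integral_polarCoord_target_fderiv_circleMap_I_mul_exp [CompleteSpace F]
    (hψ : ContDiff ℝ 1 ψ) (hcs : HasCompactSupport ψ) (w : ℂ) :
    ∫ p in polarCoord.target, fderiv ℝ ψ (circleMap w p.1 p.2) (I * exp (p.2 * I)) = 0 := by
  have hint := integrableOn_polarCoord_target_fderiv_circleMap hψ hcs w
    (v := fun θ => I * exp (θ * I)) (by fun_prop)
  rw [polarCoord_target, Measure.volume_eq_prod] at hint ⊢
  rw [setIntegral_prod _ hint]
  refine setIntegral_eq_zero_of_forall_eq_zero fun r (hr : 0 < r) => ?_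
  rw [← integral_Ioc_eq_integral_Ioo, ← intervalIntegral.integral_of_le (by linarith [Real.pi_pos]),
    integral_fderiv_circleMap_I_mul_exp hψ w hr.ne']

end Circle

section Pompeiu

theorem dbar_exp_sub_mul {g φ : ℂ → ℂ} (a : ℂ) {z : ℂ} (hg : DifferentiableAt ℝ g z)
    (hφ : DifferentiableAt ℝ φ z) :
    dbar (fun z => exp (a - g z) * φ z) z = exp (a - g z) * (dbar φ z - dbar g z * φ z) := by
  have hexp : DifferentiableAt ℝ (fun z => exp (a - g z)) z :=
    ((differentiableAt_const a).sub hg).cexp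
  rw [dbar_mul hexp hφ, dbar_cexp (f := fun z => a - g z) ((differentiableAt_const a).sub hg),
    dbar_const_sub a hg]
  ring

theorem eqOn_smul_dbar_div_circleMap_sub (f : ℂ → ℂ) (w : ℂ) :
    EqOn (fun p : ℝ × ℝ =>
        p.1 • (dbar f (circleMap w p.1 p.2) / (π * (circleMap w p.1 p.2 - w))))
      (fun p => (2 * π : ℂ)⁻¹ * (fderiv ℝ f (circleMap w p.1 p.2) (exp (p.2 * I)) +
        I * fderiv ℝ f (circleMap w p.1 p.2) (I * exp (p.2 * I)))) polarCoord.target := by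
  rintro ⟨r, θ⟩ ⟨hr : 0 < r, -⟩
  dsimp only
  have hconj : conj (exp (θ * I)) = (exp (θ * I))⁻¹ := by
    rw [← exp_conj, ← exp_neg, map_mul, conj_ofReal, conj_I, mul_neg]
  rw [← two_mul_conj_mul_dbar, hconj, circleMap_sub_center, circleMap_zero, real_smul]
  have hr' : (r : ℂ) ≠ 0 := ofReal_ne_zero.2 (ne_of_gt hr)
  have hπ : (π : ℂ) ≠ 0 := ofReal_ne_zero.2 Real.pi_ne_zero
  field_simp

variable {ψ : ℂ → ℂ}

theorem HasCompactSupport.integrable_dbar_div_sub (hcs : HasCompactSupport ψ)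
    (hψ : ContDiff ℝ 1 ψ) (w : ℂ) :
    Integrable fun z => dbar ψ z / (π * (z - w)) := by
  have hradial := integrableOn_polarCoord_target_fderiv_circleMap hψ hcs w
    (v := fun θ => exp (θ * I)) (by fun_prop)
  have hangular := integrableOn_polarCoord_target_fderiv_circleMap hψ hcs w
    (v := fun θ => I * exp (θ * I)) (by fun_prop)
  refine integrable_of_integrableOn_circleMap w <| IntegrableOn.congr_fun ?_
    (eqOn_smul_dbar_div_circleMap_sub ψ w).symm polarCoord.open_target.measurableSet
  exact (hradial.add (hangular.const_mul I)).const_mul _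

theorem HasCompactSupport.integral_dbar_div_sub (hcs : HasCompactSupport ψ)
    (hψ : ContDiff ℝ 1 ψ) (w : ℂ) :
    ∫ z, dbar ψ z / (π * (z - w)) = -ψ w := by
  have hradial := integrableOn_polarCoord_target_fderiv_circleMap hψ hcs w
    (v := fun θ => exp (θ * I)) (by fun_prop)
  have hangular := integrableOn_polarCoord_target_fderiv_circleMap hψ hcs w
    (v := fun θ => I * exp (θ * I)) (by fun_prop)
  rw [← integral_comp_circleMap _ w, setIntegral_congr_fun polarCoord.open_target.measurableSet
      (eqOn_smul_dbar_div_circleMap_sub ψ w),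
    integral_const_mul, integral_add hradial (hangular.const_mul I), integral_const_mul,
    integral_polarCoord_target_fderiv_circleMap_exp hψ hcs w,
    integral_polarCoord_target_fderiv_circleMap_I_mul_exp hψ hcs w]
  have hπ : (π : ℂ) ≠ 0 := ofReal_ne_zero.2 Real.pi_ne_zero
  rw [real_smul]
  push_cast
  field_simp
  ring

end Pompeiu

/-- The kernel `S(z) = exp(g(w) − g(z))/(π(z − w))` inverts the perturbed
Cauchy–Riemann operator `∂̄ + ∂̄g` : for every `C¹` compactly supported `φ`,
`∫ S·(−∂̄φ + ∂̄g·φ) dA = φ(w)`, i.e. `(∂̄ + ∂̄g)S = δ_w` distributionally. -/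
theorem stmt1 (g : ℂ → ℂ) (hg : ContDiff ℝ 1 g) (w : ℂ)
    (φ : ℂ → ℂ) (hφ : ContDiff ℝ 1 φ) (hφc : HasCompactSupport φ) :
    Integrable (fun z : ℂ =>
      (Complex.exp (g w - g z) / ((Real.pi : ℂ) * (z - w))) *
        (-(dbar φ z) + dbar g z * φ z)) volume ∧
    ∫ z : ℂ,
      (Complex.exp (g w - g z) / ((Real.pi : ℂ) * (z - w))) *
        (-(dbar φ z) + dbar g z * φ z) = φ w := by
  set ψ : ℂ → ℂ := fun z => exp (g w - g z) * φ z
  have hψ : ContDiff ℝ 1 ψ := (contDiff_const.sub hg).cexp.mul hφ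
  have hψc : HasCompactSupport ψ := hφc.mul_left
  have hintegrand : (fun z : ℂ => exp (g w - g z) / (π * (z - w)) *
      (-dbar φ z + dbar g z * φ z)) = fun z => -(dbar ψ z / (π * (z - w))) := by
    ext z
    rw [dbar_exp_sub_mul (g w) (hg.differentiable one_ne_zero z)
      (hφ.differentiable one_ne_zero z)]
    ring
  rw [hintegrand, integral_neg, hψc.integral_dbar_div_sub hψ w]
  exact ⟨(hψc.integrable_dbar_div_sub hψ w).neg, by simp [ψ]⟩
end

section
/- Let g : ℂ → ℂ be defined near w ∈ ℂ and differentiable over ℝ at w, and set a = ∂̄g(w). Then the near-diagonal expansion of the kernel S(z) = exp(g(w) − g(z))/(π(z − w)) holds: lim_{z → w, z ≠ w} [ exp(g(w) − g(z)) · exp(2 i · Im(a · conj(z − w))) / (π (z − w)) − 1/(π (z − w)) ] = −(2/π) · ∂(Re g)(w), where ∂(Re g)(w) = ½(∂ₓ(Re g)(w) − i ∂ᵧ(Re g)(w)). (This identifies the subleading coefficient r_α(w) = −(2/π)(∂_z Re g)(w) in the expansion S_α(z,w)·e^{2i Im(a·conj(z−w))} = 1/(π(z−w)) + r_α(w) +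 o(1), which drives the Quillen-type variational formula for determinants of the family of Cauchy–Riemann operators ∂̄ + t ∂̄g.) -/
/-!
Write the real derivative of `g` at `w` as `v ↦ ∂g(w)·v + ∂̄g(w)·v̄`. The phase
`2i·Im(a·conj(z−w)) = a·conj(z−w) − ā·(z−w)` cancels the antiholomorphic part of `g(z) − g(w)`,
so the total exponent `h(z)` is `−(∂g(w) + conj ∂̄g(w))·(z−w) + o(z−w)`. As `e^h − 1 = h·(1 + o(1))`,
the expression tends to `−(∂g(w) + conj ∂̄g(w))/π`, and `∂g + conj ∂̄g = 2 ∂(Re g)`.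
-/

open Filter Topology
open Complex (I reCLM)
open ComplexConjugate

noncomputable def dz (f : ℂ → ℂ) (z : ℂ) : ℂ :=
  (1 / 2) * (fderiv ℝ f z 1 - I * fderiv ℝ f z I)

theorem ContinuousLinearMap.apply_eq_mul_add_mul_conj (L : ℂ →L[ℝ] ℂ) (v : ℂ) :
    L v = (1 / 2) * (L 1 - I * L I) * v + (1 / 2) * (L 1 + I * L I) * conj v := by
  have hv : L v = v.re * L 1 + v.im * L I := by
    conv_lhs => rw [← Complex.re_add_im v, ← mul_one (v.re : ℂ)]
    simp only [map_add, ← Complex.real_smul, map_smul]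
  rw [hv]
  conv_rhs => rw [← Complex.re_add_im v]
  simp only [map_add, map_mul, Complex.conj_ofReal, Complex.conj_I]
  linear_combination (v.im * L I) * Complex.I_sq

theorem fderiv_apply_eq_dz_mul_add_dbar_mul_conj (f : ℂ → ℂ) (z v : ℂ) :
    fderiv ℝ f z v = dz f z * v + dbar f z * conj v :=
  (fderiv ℝ f z).apply_eq_mul_add_mul_conj v

theorem half_fderiv_re_sub_I_mul_eq_dz_add_conj_dbar {g : ℂ → ℂ} {w : ℂ} (hg : DifferentiableAt ℝ g w) :
    (1 / 2 : ℂ) * (((fderiv ℝ (fun z => (g z).re) w 1 : ℝ) : ℂ) -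
        I * ((fderiv ℝ (fun z => (g z).re) w I : ℝ) : ℂ)) =
      (dz g w + conj (dbar g w)) / 2 := by
  have hre : fderiv ℝ (fun z => (g z).re) w = reCLM.comp (fderiv ℝ g w) :=
    (reCLM.hasFDerivAt.comp w hg.hasFDerivAt).fderiv
  simp only [hre, ContinuousLinearMap.coe_comp, Function.comp_apply, Complex.reCLM_apply,
    Complex.re_eq_add_conj, dz, dbar, map_mul, map_add, map_div₀, map_one, map_ofNat,
    Complex.conj_I]
  ring

theorem tendsto_exp_sub_one_div {α : Type*} {l : Filter α} {h q : α → ℂ} {c : ℂ}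
    (hh : Tendsto h l (𝓝 0)) (hhq : Tendsto (fun x => h x / q x) l (𝓝 c)) :
    Tendsto (fun x => (Complex.exp (h x) - 1) / q x) l (𝓝 c) := by
  have hslope : Tendsto (dslope Complex.exp 0) (𝓝 0) (𝓝 1) := by
    simpa using (continuousAt_dslope_same.2 (Complex.differentiableAt_exp (x := 0))).tendsto
  have hfac (x : α) :
      (Complex.exp (h x) - 1) / q x = dslope Complex.exp 0 (h x) * (h x / q x) := by
    have := sub_smul_dslope Complex.exp 0 (h x)
    rw [sub_zero, smul_eq_mul, Complex.exp_zero] at this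
    rw [← this]; ring
  simpa only [hfac, one_mul, Function.comp_apply] using (hslope.comp hh).mul hhq

theorem tendsto_sub_add_two_I_im_div {g : ℂ → ℂ} {w : ℂ} (hg : DifferentiableAt ℝ g w) :
    Tendsto (fun z => (g w - g z + 2 * I * ((dbar g w * conj (z - w)).im : ℂ)) / (z - w))
      (𝓝[≠] w) (𝓝 (-(dz g w + conj (dbar g w)))) := by
  have hrem : Tendsto (fun z => (g z - g w - fderiv ℝ g w (z - w)) / (z - w)) (𝓝[≠] w) (𝓝 0) :=
    hg.hasFDerivAt.isLittleO.tendsto_div_nhds_zero.mono_left nhdsWithin_le_nhds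
  have hlim := hrem.neg.sub_const (dz g w + conj (dbar g w))
  rw [neg_zero, zero_sub] at hlim
  refine hlim.congr' ?_
  filter_upwards [self_mem_nhdsWithin] with z hz
  have hzw : z - w ≠ 0 := sub_ne_zero.mpr hz
  have him : 2 * I * ((dbar g w * conj (z - w)).im : ℂ) =
      dbar g w * conj (z - w) - conj (dbar g w) * (z - w) := by
    have hconj : conj (dbar g w * conj (z - w)) = conj (dbar g w) * (z - w) := by simp
    rw [← hconj, Complex.sub_conj]
    push_cast; ring
  rw [him, fderiv_apply_eq_dz_mul_add_dbar_mul_conj]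
  field_simp
  ring

/-- Near-diagonal expansion of the kernel `S(z) = exp(g(w)−g(z))/(π(z−w))`:
with `a = ∂̄g(w)`,
`lim_{z→w} [ S(z)·e^{2i·Im(a·conj(z−w))} − 1/(π(z−w)) ] = −(2/π)·∂(Re g)(w)`,
where `∂(Re g)(w) = ½(∂ₓ(Re g)(w) − i·∂ᵧ(Re g)(w))`. -/
theorem stmt3 (g : ℂ → ℂ) (w : ℂ) (hg : DifferentiableAt ℝ g w)
    (a : ℂ) (ha : a = dbar g w) :
    Tendsto
      (fun z : ℂ =>
        Complex.exp (g w - g z) *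
            Complex.exp (2 * Complex.I * (((a * (starRingEnd ℂ) (z - w)).im : ℝ) : ℂ)) /
              ((Real.pi : ℂ) * (z - w)) -
          1 / ((Real.pi : ℂ) * (z - w)))
      (𝓝[≠] w)
      (𝓝 (-(2 / (Real.pi : ℂ)) *
        ((1 / 2 : ℂ) *
          (((fderiv ℝ (fun z : ℂ => (g z).re) w 1 : ℝ) : ℂ) -
            Complex.I * ((fderiv ℝ (fun z : ℂ => (g z).re) w Complex.I : ℝ) : ℂ))))) := by
  subst ha
  set h : ℂ → ℂ := fun z => g w - g z + 2 * I * ((dbar g w * conj (z - w)).im : ℂ)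
  have hh : Tendsto h (𝓝[≠] w) (𝓝 0) := by
    have hcont : ContinuousAt h w := by
      have := hg.continuousAt
      fun_prop
    simpa [h] using hcont.tendsto.mono_left nhdsWithin_le_nhds
  have hhq : Tendsto (fun z => h z / (Real.pi * (z - w))) (𝓝[≠] w)
      (𝓝 (-(dz g w + conj (dbar g w)) / Real.pi)) := by
    simpa only [mul_comm (Real.pi : ℂ), ← div_div] using
      (tendsto_sub_add_two_I_im_div hg).div_const (Real.pi : ℂ)
  rw [half_fderiv_re_sub_I_mul_eq_dz_add_conj_dbar hg]
  convert tendsto_exp_sub_one_div hh hhq using 2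
  · simp only [h, Complex.exp_add, sub_div]
  · field_simp
end

section
/- Set z₀ = ε' + ε τ. Then the instanton partition function of the compactified free field evaluates as: Σ_{(a,b) ∈ ℤ×ℤ} exp( −(2π/Im τ)·|b/2 − conj(τ)·a/2|² − 4π i ((b/2)·ε + (a/2)·ε') − π i·a·b ) = √(2 Im τ) · exp(−2π (Im z₀)²/Im τ) · |θ₃(z₀)|². (Equivalently, with half-integers n = a/2, m = b/2, Z_inst = Σ_{n,m ∈ ½ℤ} e^{−S(φ_{nm})} where S(φ_{nm}) = (2π/Im τ)|m − conj(τ) n|² + 4π i (m ε + n ε') + 4π i n m; the sum converges absolutely.) -/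
/-! For fixed `a`, the sum over `b` is a theta series in `b` with parameter `I / (2 Im τ)`. The
Jacobi imaginary transformation (Poisson summation) turns it into `√(2 Im τ)` times a theta series
with parameter `τ - conj τ = 2 Im τ * I`, and that series is `∑ₘ θₘ(z₀) * conj θₘ₊ₐ(z₀)`, where
`θₘ` are the terms of `θ₃(z₀)`. Summing over `a` reassembles `θ₃(z₀) * conj θ₃(z₀)`. Absolute
convergence comes from the positive definiteness of `(a, b) ↦ |b - a τ|²` on `ℝ²`. -/

open Complex Real
open scoped ComplexConjugate

noncomputable section

namespace InstantonPartitionFunction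

lemma jacobiTheta₂_term_mul_conj_add (a m : ℤ) (z τ : ℂ) :
    jacobiTheta₂_term m z τ * conj (jacobiTheta₂_term (m + a) z τ) =
      cexp (-π * I * a ^ 2 * conj τ - 2 * π * I * a * conj z) *
        jacobiTheta₂_term m (z - conj z - a * conj τ) (τ - conj τ) := by
  simp only [jacobiTheta₂_term, ← exp_conj, ← Complex.exp_add]
  congr 1
  simp only [map_add, map_mul, map_pow, map_ofNat, conj_I, conj_ofReal, map_intCast]
  push_cast
  ring

lemma jacobiTheta₂_I_div {u : ℝ} (hu : 0 < u) (w : ℂ) :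
    cexp (-π * w ^ 2 / u) * jacobiTheta₂ (I * w / u) (I / u) =
      √u * jacobiTheta₂ w (u * I) := by
  have hu' : (u : ℂ) ≠ 0 := ofReal_ne_zero.mpr hu.ne'
  have hneg_I_mul : -I * (I / u) = ((u⁻¹ : ℝ) : ℂ) := by
    push_cast; field_simp; rw [I_sq]; ring
  have hsqrt : (1 : ℂ) / ((u⁻¹ : ℝ) : ℂ) ^ (1 / 2 : ℂ) = √u := by
    rw [show (1 / 2 : ℂ) = ((1 / 2 : ℝ) : ℂ) by norm_num, ← ofReal_cpow (by positivity),
      ← Real.sqrt_eq_rpow, Real.sqrt_inv, ofReal_inv, one_div, inv_inv]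
  have hdiv : I * w / u / (I / u) = w := by field_simp
  have hneg_inv : -1 / (I / u) = u * I := by field_simp; simp
  have hexp : cexp (-π * w ^ 2 / u) * cexp (-π * I * (I * w / u) ^ 2 / (I / u)) = 1 := by
    rw [← Complex.exp_add, ← Complex.exp_zero]
    congr 1
    field_simp
    linear_combination (-π * w ^ 2) * I_sq
  rw [jacobiTheta₂_functional_equation, hneg_I_mul, hsqrt, hdiv, hneg_inv]
  linear_combination (√u * jacobiTheta₂ w (u * I)) * hexp

lemma exists_pos_mul_sq_add_sq_le_norm_sub_mul_sq {z : ℂ} (hz : z.im ≠ 0) :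
    ∃ c > 0, ∀ a b : ℝ, c * (a ^ 2 + b ^ 2) ≤ ‖(b : ℂ) - a * z‖ ^ 2 := by
  have hy : 0 < z.im ^ 2 := by positivity
  have hD : 0 < 1 + 2 * z.re ^ 2 + 2 * z.im ^ 2 := by positivity
  refine ⟨z.im ^ 2 / (1 + 2 * z.re ^ 2 + 2 * z.im ^ 2), by positivity, fun a b => ?_⟩
  rw [Complex.sq_norm, normSq_apply, div_mul_eq_mul_div, div_le_iff₀ hD]
  simp only [sub_re, sub_im, ofReal_re, ofReal_im, re_ofReal_mul, im_ofReal_mul, zero_sub]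
  -- `b² ≤ 2 (b - a x)² + 2 x² a²`, the difference being `(b - 2 a x)²`
  nlinarith [sq_nonneg (b - a * z.re), mul_nonneg hy.le (sq_nonneg (b - 2 * a * z.re)),
    mul_nonneg (mul_nonneg hy.le hy.le) (sq_nonneg a),
    mul_nonneg (sq_nonneg z.re) (sq_nonneg (b - a * z.re))]

lemma summable_exp_neg_mul_int_sq {c : ℝ} (hc : 0 < c) :
    Summable fun n : ℤ => rexp (-c * n ^ 2) := by
  refine (summable_pow_mul_jacobiTheta₂_term_bound 0 (T := c / π) (by positivity) 0).congr
    fun n => ?_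
  rw [pow_zero, one_mul]
  congr 1
  field_simp
  ring

lemma summable_exp_neg_mul_norm_int_sub_int_mul_sq {z : ℂ} (hz : z.im ≠ 0) {s : ℝ}
    (hs : 0 < s) : Summable fun p : ℤ × ℤ => rexp (-s * ‖(p.2 : ℂ) - p.1 * z‖ ^ 2) := by
  obtain ⟨c, hc, hle⟩ := exists_pos_mul_sq_add_sq_le_norm_sub_mul_sq hz
  have hgauss := summable_exp_neg_mul_int_sq (mul_pos hs hc)
  have hprod := hgauss.mul_of_nonneg hgauss (fun _ => (exp_pos _).le) (fun _ => (exp_pos _).le)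
  refine hprod.of_nonneg_of_le (fun _ => (exp_pos _).le) fun p => ?_
  rw [← Real.exp_add, Real.exp_le_exp]
  have := mul_le_mul_of_nonneg_left (hle p.1 p.2) hs.le
  push_cast at this
  nlinarith

lemma tsum_tsum_mul_add_eq_tsum_mul_tsum {R : Type*} [NormedRing R] [CompleteSpace R]
    {f g : ℤ → R} (hf : Summable fun n => ‖f n‖) (hg : Summable fun n => ‖g n‖) :
    ∑' a, ∑' m, f m * g (m + a) = (∑' n, f n) * ∑' n, g n := by
  let e : ℤ × ℤ ≃ ℤ × ℤ :=
    (Equiv.prodComm ℤ ℤ).trans (Equiv.prodShear (Equiv.refl ℤ) Equiv.addLeft)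
  have hs := summable_mul_of_summable_norm hf hg
  rw [tsum_mul_tsum_of_summable_norm hf hg, ← e.tsum_eq]
  exact (e.summable_iff.mpr hs).tsum_prod.symm

/-- `exp (-S(φₙₘ))` at the half-integers `n = a / 2`, `m = b / 2`. -/
def instantonTerm (τ : ℂ) (ε ε' : ℝ) (a b : ℤ) : ℂ :=
  cexp (((-(2 * π / τ.im) * (‖(b : ℂ) / 2 - conj τ * ((a : ℂ) / 2)‖) ^ 2 : ℝ) : ℂ)
    - 4 * (π : ℂ) * I * (((b : ℂ) / 2) * (ε : ℂ) + ((a : ℂ) / 2) * (ε' : ℂ))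
    - (π : ℂ) * I * (a : ℂ) * (b : ℂ))

lemma norm_instantonTerm (τ : ℂ) (ε ε' : ℝ) (a b : ℤ) :
    ‖instantonTerm τ ε ε' a b‖ = rexp (-(π / (2 * τ.im)) * ‖(b : ℂ) - a * τ‖ ^ 2) := by
  have hnorm : ‖(b : ℂ) / 2 - conj τ * ((a : ℂ) / 2)‖ = ‖(b : ℂ) - a * τ‖ / 2 := by
    rw [← Complex.norm_conj, ← RCLike.norm_ofNat (K := ℂ) 2, ← norm_div]
    congr 1
    simp only [map_sub, map_div₀, map_mul, conj_conj, map_intCast, map_ofNat]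
    ring
  rw [instantonTerm, norm_exp, sub_re, sub_re, ofReal_re, hnorm]
  congr 1
  simp only [neg_mul, mul_re, re_ofNat, ofReal_re, im_ofNat, ofReal_im, mul_zero, sub_zero,
    I_re, mul_im, zero_mul, add_zero, I_im, mul_one, sub_self, add_re, div_ofNat_re, intCast_re,
    div_ofNat_im, intCast_im, zero_div, add_im, zero_add]
  ring

lemma summable_norm_instantonTerm {τ : ℂ} (hτ : 0 < τ.im) (ε ε' : ℝ) :
    Summable fun p : ℤ × ℤ => ‖instantonTerm τ ε ε' p.1 p.2‖ := by
  simp only [norm_instantonTerm]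
  exact summable_exp_neg_mul_norm_int_sub_int_mul_sq hτ.ne' (by positivity)

lemma instantonTerm_eq {τ : ℂ} (hτ : 0 < τ.im) (ε ε' : ℝ) (a b : ℤ) :
    let z₀ : ℂ := ε' + ε * τ
    let w : ℂ := z₀ - conj z₀ - a * conj τ
    instantonTerm τ ε ε' a b =
      (rexp (-2 * π * z₀.im ^ 2 / τ.im) *
          cexp (-π * I * a ^ 2 * conj τ - 2 * π * I * a * conj z₀)) *
        (cexp (-π * w ^ 2 / ((2 * τ.im : ℝ) : ℂ)) *
          jacobiTheta₂_term b (I * w / ((2 * τ.im : ℝ) : ℂ)) (I / ((2 * τ.im : ℝ) : ℂ))) := by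
  intro z₀ w
  have conj_eq_sub_I_mul (z : ℂ) : conj z = z - I * ((2 * z.im : ℝ) : ℂ) := by
    rw [mul_comm, ← sub_conj]; ring
  have ht : (τ.im : ℂ) ≠ 0 := ofReal_ne_zero.mpr hτ.ne'
  have hz₀ : z₀.im = ε * τ.im := by simp [z₀]
  have hnorm : (((‖(b : ℂ) / 2 - conj τ * ((a : ℂ) / 2)‖) ^ 2 : ℝ) : ℂ) =
      ((b : ℂ) / 2 - conj τ * ((a : ℂ) / 2)) * ((b : ℂ) / 2 - τ * ((a : ℂ) / 2)) := by
    rw [Complex.sq_norm, ← mul_conj]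
    simp [map_ofNat]
  simp only [instantonTerm, jacobiTheta₂_term, w, ofReal_exp, ← Complex.exp_add]
  congr 1
  rw [ofReal_mul, hnorm, conj_eq_sub_I_mul z₀, hz₀, conj_eq_sub_I_mul τ]
  simp only [z₀]
  push_cast
  field_simp
  ring_nf
  simp only [I_sq, I_pow_three]
  ring_nf

lemma tsum_instantonTerm {τ : ℂ} (hτ : 0 < τ.im) (ε ε' : ℝ) (a : ℤ) :
    let z₀ : ℂ := ε' + ε * τ
    ∑' b, instantonTerm τ ε ε' a b =
      √(2 * τ.im) * rexp (-2 * π * z₀.im ^ 2 / τ.im) *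
        ∑' m, jacobiTheta₂_term m z₀ τ * conj (jacobiTheta₂_term (m + a) z₀ τ) := by
  intro z₀
  simp only [instantonTerm_eq hτ, jacobiTheta₂_term_mul_conj_add]
  rw [tsum_mul_left, tsum_mul_left, tsum_mul_left, ← jacobiTheta₂, ← jacobiTheta₂,
    jacobiTheta₂_I_div (by positivity), sub_conj τ]
  ring

end InstantonPartitionFunction

open InstantonPartitionFunction in
/-- Poisson-summation evaluation of the instanton partition function of the
compactified free field on the torus `ℂ/(ℤ+τℤ)`: with `z₀ = ε' + ετ` and the sum
running over half-integers `n = a/2`, `m = b/2`,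
`Σ exp(−(2π/Imτ)|m − conj(τ)n|² − 4πi(mε + nε') − 4πinm)
  = √(2 Im τ)·exp(−2π(Im z₀)²/Im τ)·|θ₃(z₀)|²`; the sum converges absolutely. -/
theorem stmt9 (τ : ℂ) (hτ : 0 < τ.im) (ε ε' : ℝ) :
    Summable (fun p : ℤ × ℤ => ‖Complex.exp (
      ((-(2 * Real.pi / τ.im) *
          (‖(p.2 : ℂ) / 2 - (starRingEnd ℂ) τ * ((p.1 : ℂ) / 2)‖) ^ 2 : ℝ) : ℂ)
        - 4 * (Real.pi : ℂ) * Complex.I *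
            (((p.2 : ℂ) / 2) * (ε : ℂ) + ((p.1 : ℂ) / 2) * (ε' : ℂ))
        - (Real.pi : ℂ) * Complex.I * (p.1 : ℂ) * (p.2 : ℂ))‖) ∧
    ∑' p : ℤ × ℤ, Complex.exp (
      ((-(2 * Real.pi / τ.im) *
          (‖(p.2 : ℂ) / 2 - (starRingEnd ℂ) τ * ((p.1 : ℂ) / 2)‖) ^ 2 : ℝ) : ℂ)
        - 4 * (Real.pi : ℂ) * Complex.I *
            (((p.2 : ℂ) / 2) * (ε : ℂ) + ((p.1 : ℂ) / 2) * (ε' : ℂ))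
        - (Real.pi : ℂ) * Complex.I * (p.1 : ℂ) * (p.2 : ℂ)) =
    ((Real.sqrt (2 * τ.im) *
        Real.exp (-2 * Real.pi * (((ε' : ℂ) + (ε : ℂ) * τ).im) ^ 2 / τ.im) *
        ‖jacobiTheta₂ ((ε' : ℂ) + (ε : ℂ) * τ) τ‖ ^ 2 : ℝ) : ℂ) := by
  have hsum := summable_norm_instantonTerm hτ ε ε'
  refine ⟨hsum, ?_⟩
  change ∑' p : ℤ × ℤ, instantonTerm τ ε ε' p.1 p.2 = _
  set z₀ : ℂ := ε' + ε * τ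
  have hθ : Summable fun n => ‖jacobiTheta₂_term n z₀ τ‖ :=
    summable_norm_iff.mpr ((summable_jacobiTheta₂_term_iff z₀ τ).mpr hτ)
  have hθ_conj : Summable fun n => ‖conj (jacobiTheta₂_term n z₀ τ)‖ := by simpa using hθ
  rw [hsum.of_norm.tsum_prod, tsum_congr (tsum_instantonTerm hτ ε ε'), tsum_mul_left,
    tsum_tsum_mul_add_eq_tsum_mul_tsum hθ hθ_conj, ← conj_tsum, ← jacobiTheta₂, mul_conj,
    ← Complex.sq_norm]
  push_cast
  ring
end
end

section
/- Let n ≥ 1, let x_1, …, x_n, y_1, …, y_n ∈ ℂ, let s_1, …, s_n ∈ ℝ, and let w ∈ ℂ be distinct from every x_j and every y_j. For z ≠ w near w define the multi-puncture Cauchy kernel S(z) = (1/(π(z−w))) · ∏_{j=1}^n exp( s_j · Log( ((z−x_j)(w−y_j)) / ((z−y_j)(w−x_j)) ) ), where Log is the principal branch of the complex logarithm (the argument of each Log tends to 1 as z → w, so S is well defined near w). Then the Robin kernel is given by: lim_{z → w, z ≠ w} [ S(z) − 1/(π(z−w)) ] = (1/π) Σ_{j=1}^n s_j ( 1/(w−x_j)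 − 1/(w−y_j) ). (This is the near-diagonal expansion S(z,w) = 1/(π(z−w)) + r_ρ(w) + O(z−w) of the continuum kernel inverting ∂̄ on the line bundle over ℂ∖{x_1,…,y_n} with multiplicative monodromy e^{2π i s_j} around x_j and e^{−2π i s_j} around y_j, which governs the variation of electric vertex correlators; for s_j ≡ ½ it is the kernel governing monomer correlations.) -/
open Filter Topology

/-!
Write `F(z) = ∏ⱼ exp(sⱼ Log qⱼ(z)) = exp(∑ⱼ sⱼ Log qⱼ(z))` with the cross-ratios
`qⱼ(z) = ((z - xⱼ)(w - yⱼ)) / ((z - yⱼ)(w - xⱼ))`. Since `qⱼ(w) = 1`, we get `F(w) = 1`, and the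
expression under the limit is `π⁻¹ (F(z) - F(w)) / (z - w)`, a difference quotient of `F`.
Its limit is `π⁻¹ F'(w)`, and `F'(w) = ∑ⱼ sⱼ qⱼ'(w) = ∑ⱼ sⱼ (1/(w - xⱼ) - 1/(w - yⱼ))`.
-/

section

variable {𝕜 : Type*} [NontriviallyNormedField 𝕜]

theorem tendsto_one_div_mul_sub_one_div_of_hasDerivAt {F : 𝕜 → 𝕜} {F' c w : 𝕜}
    (hF : HasDerivAt F F' w) (hFw : F w = 1) :
    Tendsto (fun z => 1 / (c * (z - w)) * F z - 1 / (c * (z - w))) (𝓝[≠] w)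
      (𝓝 (1 / c * F')) := by
  refine ((hasDerivAt_iff_tendsto_slope.mp hF).const_mul (1 / c)).congr fun z => ?_
  rw [slope_def_field, hFw, one_div, one_div, mul_inv]
  ring

theorem cross_ratio_self {a b w : 𝕜} (ha : w ≠ a) (hb : w ≠ b) :
    ((w - a) * (w - b)) / ((w - b) * (w - a)) = 1 := by
  rw [mul_comm, div_self (mul_ne_zero (sub_ne_zero.mpr hb) (sub_ne_zero.mpr ha))]

theorem hasDerivAt_cross_ratio {a b w : 𝕜} (ha : w ≠ a) (hb : w ≠ b) :
    HasDerivAt (fun z => ((z - a) * (w - b)) / ((z - b) * (w - a)))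
      (1 / (w - a) - 1 / (w - b)) w := by
  have ha' : w - a ≠ 0 := sub_ne_zero.mpr ha
  have hb' : w - b ≠ 0 := sub_ne_zero.mpr hb
  have hnum : HasDerivAt (fun z => (z - a) * (w - b)) (w - b) w := by
    simpa using ((hasDerivAt_id w).sub_const a).mul_const (w - b)
  have hden : HasDerivAt (fun z => (z - b) * (w - a)) (w - a) w := by
    simpa using ((hasDerivAt_id w).sub_const b).mul_const (w - a)
  refine (hnum.fun_div hden (mul_ne_zero hb' ha')).congr_deriv ?_
  rw [eq_comm, div_sub_div _ _ ha' hb', div_eq_div_iff (mul_ne_zero ha' hb')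
    (pow_ne_zero 2 (mul_ne_zero hb' ha'))]
  ring

end

theorem hasDerivAt_log_cross_ratio {a b w : ℂ} (ha : w ≠ a) (hb : w ≠ b) :
    HasDerivAt (fun z => Complex.log (((z - a) * (w - b)) / ((z - b) * (w - a))))
      (1 / (w - a) - 1 / (w - b)) w := by
  have hq := cross_ratio_self ha hb
  have hlog := (Complex.hasDerivAt_log (hq ▸ Complex.one_mem_slitPlane)).comp w
    (hasDerivAt_cross_ratio ha hb)
  rwa [hq, inv_one, one_mul] at hlog

theorem stmt11_general (n : ℕ) (x y : Fin n → ℂ) (s : Fin n → ℝ) (w : ℂ)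
    (hx : ∀ j, w ≠ x j) (hy : ∀ j, w ≠ y j) :
    Tendsto
      (fun z : ℂ =>
        (1 / ((Real.pi : ℂ) * (z - w))) *
            ∏ j, Complex.exp ((s j : ℂ) *
              Complex.log (((z - x j) * (w - y j)) / ((z - y j) * (w - x j)))) -
          1 / ((Real.pi : ℂ) * (z - w)))
      (𝓝[≠] w)
      (𝓝 ((1 / (Real.pi : ℂ)) *
        ∑ j, (s j : ℂ) * (1 / (w - x j) - 1 / (w - y j)))) := by
  have hq j := cross_ratio_self (hx j) (hy j)
  have hF := (HasDerivAt.fun_sum (u := Finset.univ) fun j _ =>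
    (hasDerivAt_log_cross_ratio (hx j) (hy j)).const_mul (s j : ℂ)).cexp
  simp only [Complex.exp_sum, hq, Complex.log_one, mul_zero, Complex.exp_zero,
    Finset.prod_const_one, one_mul] at hF
  exact tendsto_one_div_mul_sub_one_div_of_hasDerivAt hF (by simp [hq])

/-- Robin kernel of the multi-puncture Cauchy kernel: with
`S(z) = (1/(π(z−w)))·∏_j exp(s_j·Log(((z−x_j)(w−y_j))/((z−y_j)(w−x_j))))`
(principal branch `Log`), one has the near-diagonal expansion
`lim_{z→w} [S(z) − 1/(π(z−w))] = (1/π) Σ_j s_j (1/(w−x_j) − 1/(w−y_j))`. -/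
theorem stmt11 (n : ℕ) (hn : 1 ≤ n) (x y : Fin n → ℂ) (s : Fin n → ℝ) (w : ℂ)
    (hx : ∀ j, w ≠ x j) (hy : ∀ j, w ≠ y j) :
    Tendsto
      (fun z : ℂ =>
        (1 / ((Real.pi : ℂ) * (z - w))) *
            ∏ j, Complex.exp ((s j : ℂ) *
              Complex.log (((z - x j) * (w - y j)) / ((z - y j) * (w - x j)))) -
          1 / ((Real.pi : ℂ) * (z - w)))
      (𝓝[≠] w)
      (𝓝 ((1 / (Real.pi : ℂ)) *
        ∑ j, (s j : ℂ) * (1 / (w - x j) - 1 / (w - y j)))) :=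
  stmt11_general n x y s w hx hy
end

section
/- Let s ∈ (0,1), let x, y ∈ ℂ with x ≠ y, and let g : ℂ → ℂ be holomorphic on ℂ ∖ {x, y}. Suppose there is a constant C such that |z − x|^s · |z − y|^{−s} · |g(z)| ≤ C for all z ∈ ℂ ∖ {x, y}. Then g(z) = 0 for all z ∈ ℂ ∖ {x, y}. (Equivalently: there is no nonzero bounded holomorphic function on the twice-punctured plane ℂ ∖ {x,y} with multiplicative monodromy e^{2π i s} around x and e^{−2π i s} around y; such a function would be f(z) = ((z−x)/(z−y))^s g(z). This uniqueness pins down the continuum kernel ∂_w G_ρ(z,w) = ((z−x)/(w−x))^s ((z−y)/(w−y))^{1−s} / (π(z−w)) for the twisted Green function.) -/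
/-!
With `w z = ‖z - x‖ ^ (-s) * ‖z - y‖ ^ s` the hypothesis reads `‖g‖ ≤ C * w` off `{x, y}`.
Near `x` this gives `g = O(‖z - x‖ ^ (-s))` and near `y` it gives `g = O(‖z - y‖ ^ s)`; since
`s < 1`, both are `o((z - c)⁻¹)`, so both singularities are removable. Far away
`‖z - y‖ ≤ 2 ‖z - x‖`, so `w ≤ 2 ^ s` and the extension is a bounded entire function,
constant by Liouville. The constant is `0` because `g → 0` at `y`.
-/

open Filter Topology Asymptotics Bornology Set

theorem le_mul_rpow_neg_mul_rpow_of_rpow_mul_le {a b s C u : ℝ} (ha : 0 < a) (hb : 0 < b)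
    (h : a ^ s * b ^ (-s) * u ≤ C) : u ≤ C * (a ^ (-s) * b ^ s) := by
  have hinv : a ^ (-s) * b ^ s * (a ^ s * b ^ (-s)) = 1 := by
    rw [Real.rpow_neg ha.le, Real.rpow_neg hb.le]
    field_simp
  calc u = a ^ (-s) * b ^ s * (a ^ s * b ^ (-s) * u) := by rw [← mul_assoc, hinv, one_mul]
    _ ≤ a ^ (-s) * b ^ s * C := by gcongr
    _ = C * (a ^ (-s) * b ^ s) := mul_comm _ _

theorem compl_pair_mem_nhdsNE {X : Type*} [TopologicalSpace X] [T1Space X] {x y : X}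
    (hxy : x ≠ y) : ({x, y}ᶜ : Set X) ∈ 𝓝[≠] x := by
  rw [← singleton_union, compl_union]
  exact inter_mem self_mem_nhdsWithin (mem_nhdsWithin_of_mem_nhds (compl_singleton_mem_nhds hxy))

section NormSubRpow

variable {E : Type*} [NormedAddCommGroup E]

theorem isBigO_principal_of_norm_sub_rpow_mul_norm_sub_rpow_neg_mul_le {F : Type*} [Norm F]
    {f : E → F} {x y : E} {s C : ℝ}
    (hC : ∀ z ∈ ({x, y}ᶜ : Set E), ‖z - x‖ ^ s * ‖z - y‖ ^ (-s) * ‖f z‖ ≤ C) :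
    f =O[𝓟 {x, y}ᶜ] fun z => ‖z - x‖ ^ (-s) * ‖z - y‖ ^ s := by
  refine IsBigO.of_bound C (eventually_principal.2 fun z hz => ?_)
  have hzx : 0 < ‖z - x‖ := norm_pos_iff.2 (sub_ne_zero.2 fun h => hz (Or.inl h))
  have hzy : 0 < ‖z - y‖ := norm_pos_iff.2 (sub_ne_zero.2 fun h => hz (Or.inr h))
  rw [Real.norm_of_nonneg (by positivity)]
  exact le_mul_rpow_neg_mul_rpow_of_rpow_mul_le hzx hzy (hC z hz)

theorem tendsto_norm_sub_rpow_nhds_zero (c : E) {t : ℝ} (ht : 0 < t) :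
    Tendsto (fun z => ‖z - c‖ ^ t) (𝓝 c) (𝓝 0) := by
  simpa [Real.zero_rpow ht.ne'] using (tendsto_norm_sub_self c).rpow_const (Or.inr ht.le)

theorem isBigO_norm_sub_rpow_mul_norm_sub_rpow {x y : E} (hxy : x ≠ y) (a b : ℝ) :
    (fun z => ‖z - x‖ ^ a * ‖z - y‖ ^ b) =O[𝓝 x] fun z => ‖z - x‖ ^ a := by
  have hy : Tendsto (fun z => ‖z - y‖ ^ b) (𝓝 x) (𝓝 (‖x - y‖ ^ b)) :=
    ((continuous_id.sub continuous_const).norm.tendsto x).rpow_const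
      (Or.inl (norm_ne_zero_iff.2 (sub_ne_zero.2 hxy)))
  simpa using (isBigO_refl (fun z => ‖z - x‖ ^ a) _).mul (hy.isBigO_one ℝ)

theorem isBigO_norm_sub_rpow_neg_mul_norm_sub_rpow_cocompact [ProperSpace E] (x y : E)
    {s : ℝ} (hs : 0 ≤ s) :
    (fun z => ‖z - x‖ ^ (-s) * ‖z - y‖ ^ s) =O[cocompact E] (1 : E → ℝ) := by
  refine IsBigO.of_bound (2 ^ s) ?_
  filter_upwards [(tendsto_dist_right_cocompact_atTop x).eventually_gt_atTop ‖x - y‖]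
    with z hz
  rw [dist_eq_norm] at hz
  have hzx : 0 < ‖z - x‖ := (norm_nonneg _).trans_lt hz
  have hzy : ‖z - y‖ ≤ 2 * ‖z - x‖ := by
    linarith [norm_sub_le_norm_sub_add_norm_sub z x y]
  calc ‖‖z - x‖ ^ (-s) * ‖z - y‖ ^ s‖ = ‖z - x‖ ^ (-s) * ‖z - y‖ ^ s := by
        rw [Real.norm_of_nonneg (by positivity)]
    _ ≤ ‖z - x‖ ^ (-s) * (2 * ‖z - x‖) ^ s := by gcongr
    _ = 2 ^ s * ‖(1 : E → ℝ) z‖ := by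
        rw [Real.mul_rpow zero_le_two hzx.le, Real.rpow_neg hzx.le]
        field_simp
        simp

end NormSubRpow

namespace Complex

variable {E : Type*} [NormedAddCommGroup E]

theorem isLittleO_inv_sub_of_isBigO_norm_sub_rpow {f : ℂ → E} {c : ℂ} {t : ℝ} (ht : -1 < t)
    (hf : f =O[𝓝[≠] c] fun z => ‖z - c‖ ^ t) : f =o[𝓝[≠] c] fun z => (z - c)⁻¹ := by
  refine hf.trans_isLittleO (IsLittleO.of_norm_right ?_)
  have hsmall : Tendsto (fun z => ‖z - c‖ ^ (t + 1)) (𝓝[≠] c) (𝓝 0) :=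
    (tendsto_norm_sub_rpow_nhds_zero c (by linarith)).mono_left nhdsWithin_le_nhds
  refine (((isLittleO_one_iff ℝ).2 hsmall).mul_isBigO
    (isBigO_refl (fun z => ‖(z - c)⁻¹‖) _)).congr' ?_ (by simp)
  filter_upwards [self_mem_nhdsWithin] with z hz
  have hzc : 0 < ‖z - c‖ := norm_pos_iff.2 (sub_ne_zero.2 hz)
  rw [Real.rpow_add hzc, Real.rpow_one, norm_inv]
  field_simp

variable [NormedSpace ℂ E] [CompleteSpace E]

theorem exists_differentiableOn_eqOn_of_isLittleO {f : ℂ → E} {U : Set ℂ} {c : ℂ}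
    (hU : U ∈ 𝓝 c) (hd : DifferentiableOn ℂ f (U \ {c}))
    (ho : f =o[𝓝[≠] c] fun z => (z - c)⁻¹) :
    ∃ F, DifferentiableOn ℂ F U ∧ EqOn F f (U \ {c}) := by
  have hconst : (fun _ => f c) =o[𝓝[≠] c] fun z => (z - c)⁻¹ :=
    IsBoundedUnder.isLittleO_sub_self_inv isBoundedUnder_const
  exact ⟨_, differentiableOn_update_limUnder_of_isLittleO hU hd (ho.sub hconst),
    fun z hz => Function.update_of_ne hz.2 _ _⟩

theorem exists_differentiable_eqOn_compl_pair_of_isLittleO {f : ℂ → E} {x y : ℂ}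
    (hxy : x ≠ y) (hd : DifferentiableOn ℂ f {x, y}ᶜ)
    (hx : f =o[𝓝[≠] x] fun z => (z - x)⁻¹) (hy : f =o[𝓝[≠] y] fun z => (z - y)⁻¹) :
    ∃ F, Differentiable ℂ F ∧ EqOn F f {x, y}ᶜ := by
  have hxy' : ({y}ᶜ \ {x} : Set ℂ) = {x, y}ᶜ := by
    rw [sdiff_eq, ← compl_union, union_comm, singleton_union]
  obtain ⟨F₁, hF₁, hF₁f⟩ := exists_differentiableOn_eqOn_of_isLittleO
    (compl_singleton_mem_nhds hxy) (hxy' ▸ hd) hx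
  have hF₁y : F₁ =o[𝓝[≠] y] fun z => (z - y)⁻¹ :=
    hy.congr' (eventually_of_mem (pair_comm x y ▸ compl_pair_mem_nhdsNE hxy.symm)
      fun z hz => (hF₁f (hxy' ▸ hz)).symm) EventuallyEq.rfl
  obtain ⟨F, hF, hFF₁⟩ := exists_differentiableOn_eqOn_of_isLittleO univ_mem
    (hF₁.mono fun z hz => hz.2) hF₁y
  refine ⟨F, differentiableOn_univ.1 hF, fun z hz => ?_⟩
  rw [hFF₁ ⟨mem_univ z, fun h => hz (Or.inr h)⟩, hF₁f (hxy' ▸ hz)]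

end Complex

/-- There is no nonzero bounded holomorphic section with monodromy `e^{2πis}` around `x`
and `e^{−2πis}` around `y` on the twice-punctured plane: if `g` is holomorphic on
`ℂ ∖ {x, y}` and `|z−x|^s·|z−y|^{−s}·|g(z)|` is bounded, then `g ≡ 0` there. -/
theorem stmt12 (s : ℝ) (hs : s ∈ Set.Ioo (0 : ℝ) 1) (x y : ℂ) (hxy : x ≠ y)
    (g : ℂ → ℂ) (hg : ∀ z ∈ ({x, y}ᶜ : Set ℂ), DifferentiableAt ℂ g z)
    (C : ℝ)
    (hC : ∀ z ∈ ({x, y}ᶜ : Set ℂ),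
      ‖z - x‖ ^ s * ‖z - y‖ ^ (-s) * ‖g z‖ ≤ C) :
    ∀ z ∈ ({x, y}ᶜ : Set ℂ), g z = 0 := by
  obtain ⟨hs0, hs1⟩ := hs
  have hnhds_y : ({x, y}ᶜ : Set ℂ) ∈ 𝓝[≠] y := pair_comm x y ▸ compl_pair_mem_nhdsNE hxy.symm
  have hcocompact : ({x, y}ᶜ : Set ℂ) ∈ cocompact ℂ := (toFinite _).isCompact.compl_mem_cocompact
  have hgw := isBigO_principal_of_norm_sub_rpow_mul_norm_sub_rpow_neg_mul_le hC
  have hgx : g =O[𝓝[≠] x] fun z => ‖z - x‖ ^ (-s) :=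
    (hgw.mono (le_principal_iff.2 (compl_pair_mem_nhdsNE hxy))).trans
      ((isBigO_norm_sub_rpow_mul_norm_sub_rpow hxy _ _).mono nhdsWithin_le_nhds)
  have hgy : g =O[𝓝[≠] y] fun z => ‖z - y‖ ^ s :=
    (hgw.mono (le_principal_iff.2 hnhds_y)).trans
      (((isBigO_norm_sub_rpow_mul_norm_sub_rpow hxy.symm _ _).congr_left
        fun z => mul_comm _ _).mono nhdsWithin_le_nhds)
  obtain ⟨F, hF, hFg⟩ := Complex.exists_differentiable_eqOn_compl_pair_of_isLittleO hxy
    (fun z hz => (hg z hz).differentiableWithinAt)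
    (Complex.isLittleO_inv_sub_of_isBigO_norm_sub_rpow (by linarith) hgx)
    (Complex.isLittleO_inv_sub_of_isBigO_norm_sub_rpow (by linarith) hgy)
  have hbdd : IsBounded (range F) := hF.continuous.isBounded_range_iff_isBigO.2 <|
    ((hgw.mono (le_principal_iff.2 hcocompact)).trans
      (isBigO_norm_sub_rpow_neg_mul_norm_sub_rpow_cocompact x y hs0.le)).congr'
        (eventually_of_mem hcocompact fun z hz => (hFg hz).symm) EventuallyEq.rfl
  have hg0 : Tendsto g (𝓝[≠] y) (𝓝 0) :=
    hgy.trans_tendsto ((tendsto_norm_sub_rpow_nhds_zero y hs0).mono_left nhdsWithin_le_nhds)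
  obtain ⟨c, hc⟩ := hF.exists_const_forall_eq_of_bounded hbdd
  have hc0 : c = 0 := tendsto_const_nhds_iff.1 <| hg0.congr' <|
    eventually_of_mem hnhds_y fun z hz => by rw [← hFg hz, hc]
  intro z hz
  rw [← hFg hz, hc, hc0]
end
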